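/- Let z₀ ∈ ℂ with Im z₀ > 0. (i) For every r > 0: ∫_r^{+∞} dx/(x·|x−z₀|) = (1/|z₀|)·log( ((|z₀|+|z₀−r|−r)·(|z₀|+Re z₀)) / ((|z₀|+r−|z₀−r|)·(|z₀|−Re z₀)) ). (ii) For every δ > 0: ∫_{−∞}^{−δ} dx/(x·|x−z₀|) = (1/|z₀|)·log( (|z₀+δ|+δ−|z₀|)/(|z₀+δ|+δ+|z₀|) ). (Both integrals converge absolutely, and all arguments of the logarithms are strictly positive.) -/

import Mathlib

open Real Set MeasureTheory Filter

noncomputable section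

/-- A domino: lower-left corner `(x, y)` and orientation
(`vertical = true` means a `1 × 2` rectangle). -/
structure Domino where
  x : ℤ
  y : ℤ
  vertical : Bool
deriving DecidableEq

/-- The closed planar region covered by a domino. -/
def Domino.region (d : Domino) : Set (ℝ × ℝ) :=
  if d.vertical then Set.Icc (d.x : ℝ) ((d.x : ℝ) + 1) ×ˢ Set.Icc (d.y : ℝ) ((d.y : ℝ) + 2)
  else Set.Icc (d.x : ℝ) ((d.x : ℝ) + 2) ×ˢ Set.Icc (d.y : ℝ) ((d.y : ℝ) + 1)

/-- `T` is a domino tiling of the region `R`: the dominoes cover exactly `R`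
and have pairwise disjoint interiors. -/
def IsTiling (R : Set (ℝ × ℝ)) (T : Finset Domino) : Prop :=
  (⋃ d ∈ T, d.region) = R ∧
    ∀ d ∈ T, ∀ d' ∈ T, d ≠ d' → interior d.region ∩ interior d'.region = ∅

/-- Number of vertical dominoes of a tiling. -/
def vertCount (T : Finset Domino) : ℕ := (T.filter fun d => d.vertical = true).card

/-- The closed unit square with lower-left corner `(i, j)`. -/
def unitSquare (i j : ℤ) : Set (ℝ × ℝ) :=
  Set.Icc (i : ℝ) ((i : ℝ) + 1) ×ˢ Set.Icc (j : ℝ) ((j : ℝ) + 1)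

/-- The Aztec diamond `A_N`. -/
def AztecDiamond (N : ℤ) : Set (ℝ × ℝ) :=
  ⋃₀ {S | ∃ i j : ℤ, S = unitSquare i j ∧
      S ⊆ {p : ℝ × ℝ | |p.1| + |p.2| ≤ (N : ℝ) + 1}}

/-- The L-shaped region `A_N^{m,k}`. -/
def AztecL (N m k : ℤ) : Set (ℝ × ℝ) :=
  ⋃₀ {S | ∃ i j : ℤ, S = unitSquare i j ∧
      S ⊆ {p : ℝ × ℝ | |p.1| + |p.2| ≤ (N : ℝ) + 1 ∧
        p.2 ≤ max (2*(m:ℝ) - 1 - (N:ℝ) - p.1) (p.1 - 2*(m:ℝ) - 1 + (N:ℝ) + 2*(k:ℝ))}}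

/-- The modified region `Ã_N^{m,k}`. -/
def AztecLtilde (N m k : ℤ) : Set (ℝ × ℝ) :=
  if m = N then AztecDiamond N
  else AztecL N (m+1) (k+1) \
      ({(2*(m:ℝ) + (k:ℝ) - (N:ℝ) - 1)} ×ˢ Set.Icc ((k:ℝ) - 1) (k:ℝ))

/-- Weighted count of domino tilings of a region: `Σ_T a^{v(T)}`. -/
def tilingSum (R : Set (ℝ × ℝ)) (a : ℝ) : ℝ :=
  ∑ᶠ T ∈ {T : Finset Domino | IsTiling R T}, a ^ vertCount T

/-- `F_N^{m,k}(a; ε)`. -/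
def Fcnt (N m k : ℤ) (a : ℝ) (ε : ℕ) : ℝ :=
  if ε = 1 then tilingSum (AztecL N m k) a else tilingSum (AztecLtilde N m k) a

/-- `F_N(a)`. -/
def FAztec (N : ℤ) (a : ℝ) : ℝ := tilingSum (AztecDiamond N) a

/-- `κ₂(μ)`. -/
def kappa2 (a μ : ℝ) : ℝ := (a^2*(2*μ - 1) + 2*a*Real.sqrt (μ*(1-μ)))/(1+a^2)

/-- `x₀(μ)`. -/
def x0 (a μ : ℝ) : ℝ := (-a - Real.sqrt (a^2 + 4*μ*(1-μ)))/(2*(1-μ))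

/-- `φ₀` (real form, valid at `x₀ < -a`). -/
def phi0 (a μ x : ℝ) : ℝ := (1-μ)*Real.log (1 - a*x) + μ*Real.log (x/(x+a))

/-- `φ₀''(x₀)`. -/
def phi0'' (a μ : ℝ) : ℝ := iteratedDeriv 2 (phi0 a μ) (x0 a μ)

/-- `x*`. -/
def xstar (a μ : ℝ) : ℝ :=
  (kappa2 a μ + a^2*(2*μ - kappa2 a μ - 1))/(2*a*(1 + kappa2 a μ - μ))

/-- `c*`. -/
def cstar (a μ : ℝ) : ℝ :=
  μ - kappa2 a μ + a^3*(1-μ)/(1/(xstar a μ) - a)^3 - μ/(1 + a/(xstar a μ))^3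

/-- `ζ'(-1)`. -/
def zetaDerivNeg1 : ℝ := (deriv riemannZeta (-1)).re

/-- The defining property of `z₀(κ, μ)`. -/
def z0spec (a κ μ : ℝ) (z : ℂ) : Prop :=
  0 < z.im ∧
  (1-μ)/‖z - 1/(a:ℂ)‖ + (μ-κ)/‖z‖ - μ/‖z + (a:ℂ)‖ = 0 ∧
  κ + 1 - μ - a*μ/‖z + (a:ℂ)‖ - (1-μ)/(a * ‖z - 1/(a:ℂ)‖) = 0

/-- `z₀(κ, μ)`, defined by choice from its defining property. -/
def z0 (a κ μ : ℝ) : ℂ := Classical.epsilon (z0spec a κ μ)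

/-- `G(κ, μ)`. -/
def Gfun (a κ μ : ℝ) : ℝ :=
  let z := z0 a κ μ
  let R := ‖z‖
  let X := z.re
  let Y := z.im
  let A1 := ‖z + (a:ℂ)‖
  let A2 := ‖z - 1/(a:ℂ)‖
  (μ-κ)/2 * (Real.log (4*R^2/(Y*(R+X))) - (X/R)*Real.log ((R+X)/Y))
  - (1-μ)/2 * (Real.log ((R*A2 + X/a - R^2)/((Y/2)*(A2 + 1/a - X)))
      + ((X - 1/a)/A2)*Real.log ((R+X)/Y))
  - μ/2 * (Real.log ((R*A1 + R^2 + a*X)/((Y/2)*(A1 + a + X)))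
      - ((X+a)/A1)*Real.log ((R+X)/Y))

/-- `H(κ, μ)`. -/
def Hfun (a : ℝ) (ε : ℕ) (κ μ : ℝ) : ℝ :=
  let z := z0 a κ μ
  let R := ‖z‖
  let X := z.re
  let Y := z.im
  let A2 := ‖z - 1/(a:ℂ)‖
  (ε:ℝ)/2 * Real.log ((a*Y^2/(2*(A2 + X - 1/a))) * ((R + A2 - 1/a)/(R + 1/a - A2))
      * ((R+X)/(R-X)))
  + Real.log (2*R/(R+X)) + Real.log (Real.cos (Complex.arg z / 2))

/-- `F(κ, μ)` (the 1/N-order coefficient in the ratio asymptotics). -/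
def Ffun (a : ℝ) (ε : ℕ) (κ μ : ℝ) : ℝ :=
  let z := z0 a κ μ
  let R := ‖z‖
  let Y := z.im
  let A2 := ‖z - 1/(a:ℂ)‖
  let γ : ℝ := (μ-κ)/((1-μ+κ)*R)
  let Q : ℂ → ℂ := fun w => (((κ+1-μ)/2 : ℝ) : ℂ) * (w - (γ:ℂ))/(w*(w+(a:ℂ))*(w-1/(a:ℂ)))
  let e0 : ℂ := -(((Real.sqrt 2 * Real.sqrt Y : ℝ)) : ℂ) * Q z
  let e1 : ℂ := (2/5 : ℂ) * deriv Q z / Q z - Complex.I/(10*(Y:ℂ))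
  let g1 : ℂ := Complex.exp (Complex.I * (Real.pi : ℂ) / 4) *
      (((Real.sqrt 2 * Real.sqrt Y : ℝ)) : ℂ) *
      (1/(z + (R:ℂ)) + (ε:ℂ)/(1/(a:ℂ) - z + (A2:ℂ)))
  let M1 : ℂ := 5/(12*z^2*e0) + (5/8)*e1/(z*e0) - g1^2/(z*e0)
  let t := Real.tan (Complex.arg z / 2)
  (Real.sqrt Y/(2*Real.sqrt 2)) * (t * M1.im - M1.re)
  - ((3/16)/(z*e0)).im/(2*Real.sqrt 2*Real.sqrt Y)
  + t * (((19/48)/(z*e0)).im/(2*Real.sqrt 2*Real.sqrt Y)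
      + (Complex.exp (-(Complex.I * (Real.pi : ℂ) / 4))*g1/(2*z*e0)).im)

/-- `C₂(κ, μ)`. -/
def C2fun (a κ μ : ℝ) : ℝ :=
  (1/2 - μ + μ^2)*Real.log (1+a^2) + ∫ κ' in (0:ℝ)..κ, Gfun a κ' μ

/-- `C₁(κ, μ)`. -/
def C1fun (a : ℝ) (ε : ℕ) (κ μ : ℝ) : ℝ :=
  (∫ κ' in (0:ℝ)..κ, Hfun a ε κ' μ) - phi0 a μ (x0 a μ)/2 + (1/2 - (ε:ℝ)*μ)*Real.log (1+a^2)

/-- `C₀(κ, μ)`. -/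
def C0fun (a : ℝ) (ε : ℕ) (κ μ : ℝ) : ℝ :=
  (∫ κ' in (0:ℝ)..κ, (Ffun a ε κ' μ - 1/(12*κ'))) + (1/12)*Real.log κ
  - (1/24)*deriv (fun s => Gfun a s μ) κ
  - (1/6)*Real.log (|x0 a μ|^2 * phi0'' a μ)
  - (ε:ℝ)/2*Real.log (1 - a*(x0 a μ)) + zetaDerivNeg1

end




open Topology in
/-- Derivative of `x ↦ √((x-p)² + q²)` for `q ≠ 0`. -/
theorem hasDerivAt_sqrtmod (p q x : ℝ) (hq : 0 < q) :
    HasDerivAt (fun y : ℝ => Real.sqrt ((y - p)^2 + q^2))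
      ((x - p) / Real.sqrt ((x - p)^2 + q^2)) x := by
  have h1 : HasDerivAt (fun y : ℝ => (y - p)^2 + q^2) (2*(x-p)) x := by
    simpa using (((hasDerivAt_id x).sub_const p).pow 2).add_const (q^2)
  have h2 := h1.sqrt (by positivity)
  convert h2 using 1
  have : (0:ℝ) < Real.sqrt ((x - p)^2 + q^2) := Real.sqrt_pos.2 (by positivity)
  field_simp

set_option maxHeartbeats 2000000 in
open Topology in
/-- explicit evaluations of the integrals
`∫_r^∞ dx/(x|x−z₀|)` and `∫_{−∞}^{−δ} dx/(x|x−z₀|)` for `Im z₀ > 0`. -/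
theorem integral_one_div_mul_abs
    (z₀ : ℂ) (hz : 0 < z₀.im) :
    (∀ r : ℝ, 0 < r →
      MeasureTheory.IntegrableOn
        (fun x : ℝ => 1/(x * ‖(x:ℂ) - z₀‖)) (Set.Ioi r) ∧
      0 < ((‖z₀‖ + ‖z₀ - (r:ℂ)‖ - r) * (‖z₀‖ + z₀.re)) /
          ((‖z₀‖ + r - ‖z₀ - (r:ℂ)‖) * (‖z₀‖ - z₀.re)) ∧
      (∫ x in Set.Ioi r, 1/(x * ‖(x:ℂ) - z₀‖)) =
        (1/‖z₀‖) * Real.log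
          (((‖z₀‖ + ‖z₀ - (r:ℂ)‖ - r) * (‖z₀‖ + z₀.re)) /
           ((‖z₀‖ + r - ‖z₀ - (r:ℂ)‖) * (‖z₀‖ - z₀.re)))) ∧
    (∀ δ : ℝ, 0 < δ →
      MeasureTheory.IntegrableOn
        (fun x : ℝ => 1/(x * ‖(x:ℂ) - z₀‖)) (Set.Iio (-δ)) ∧
      0 < (‖z₀ + (δ:ℂ)‖ + δ - ‖z₀‖) /
          (‖z₀ + (δ:ℂ)‖ + δ + ‖z₀‖) ∧
      (∫ x in Set.Iio (-δ), 1/(x * ‖(x:ℂ) - z₀‖)) =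
        (1/‖z₀‖) * Real.log
          ((‖z₀ + (δ:ℂ)‖ + δ - ‖z₀‖) /
           (‖z₀ + (δ:ℂ)‖ + δ + ‖z₀‖))) := by
  set p := z₀.re with hpdef
  set q := z₀.im with hqdef
  have hq : 0 < q := hz
  set R := ‖z₀‖ with hRdef
  have hz0 : z₀ ≠ 0 := by
    intro h
    rw [hqdef, h] at hq
    simp at hq
  have hR : 0 < R := norm_pos_iff.2 hz0
  have hpR : |p| < R := Complex.abs_re_lt_norm.2 (ne_of_gt hq)
  have hRp1 : 0 < R + p := by
    obtain ⟨h1, h2⟩ := abs_lt.1 hpR; linarith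
  have hRp2 : 0 < R - p := by
    obtain ⟨h1, h2⟩ := abs_lt.1 hpR; linarith
  have hR2 : R^2 = p^2 + q^2 := by
    rw [hRdef, Complex.sq_norm, Complex.normSq_apply]; ring
  set A : ℝ → ℝ := fun x => Real.sqrt ((x - p)^2 + q^2) with hAdef
  have hApos : ∀ x : ℝ, 0 < A x := fun x => Real.sqrt_pos.2 (by positivity)
  have hA2 : ∀ x : ℝ, (A x)^2 = (x - p)^2 + q^2 := fun x => Real.sq_sqrt (by positivity)
  have habs : ∀ x : ℝ, ‖(x:ℂ) - z₀‖ = A x := by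
    intro x
    rw [Complex.norm_def, Complex.normSq_apply, hAdef]
    congr 1
    simp [hpdef, hqdef]
    ring
  set v : ℝ → ℝ := fun x => R * A x + R^2 - p * x with hvdef
  have hv : ∀ x : ℝ, 0 < v x := by
    intro x
    have hu := mul_pos hR (hApos x)
    rcases le_or_gt (p*x) (R^2) with h | h
    · simp only [hvdef]; linarith
    · have hx2 : 0 < x^2 := by
        rcases eq_or_ne x 0 with rfl | hx
        · nlinarith [sq_nonneg R]
        · positivity
      have h2 : (R*A x)^2 - (p*x - R^2)^2 = q^2*x^2 := by
        rw [mul_pow, hA2 x]; linear_combination (x^2 - R^2) * hR2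
      simp only [hvdef]
      nlinarith [h2, hu, h, mul_pos (mul_pos hq hq) hx2]
  set F : ℝ → ℝ := fun x => -(R⁻¹) * (Real.log (v x) - Real.log x) with hFdef
  have hF : ∀ x : ℝ, x ≠ 0 → HasDerivAt F (1/(x * A x)) x := by
    intro x hx
    have hA := hasDerivAt_sqrtmod p q x hq
    have hvd : HasDerivAt v (R * ((x-p)/A x) - p) x := by
      have := ((hA.const_mul R).add_const (R^2)).sub ((hasDerivAt_id x).const_mul p)
      simp only [mul_one] at this
      exact this
    have hlogv : HasDerivAt (fun y => Real.log (v y)) ((R*((x-p)/A x) - p)/v x) x :=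
      hvd.log (hv x).ne'
    have hlogx : HasDerivAt Real.log x⁻¹ x := Real.hasDerivAt_log hx
    have hcomb := (hlogv.sub hlogx).const_mul (-(R⁻¹))
    have hAne := (hApos x).ne'
    have hRne := hR.ne'
    have hvne : R * A x + R^2 - p * x ≠ 0 := by
      have := hv x; simp only [hvdef] at this; exact this.ne'
    have hA2' : (A x)^2 = x^2 - 2*p*x + R^2 := by
      rw [hA2 x]; linear_combination -hR2
    have hgoal : 1/(x * A x)
        = -(R⁻¹) * ((R*((x-p)/A x) - p)/(R * A x + R^2 - p * x) - x⁻¹) := by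
      have hv2 : R * (A x + R) - x * p ≠ 0 := by intro h; apply hvne; linear_combination h
      field_simp
      linear_combination (-R) * hA2'
    have hvx : v x = R * A x + R^2 - p * x := by simp only [hvdef]
    rw [hgoal, ← hvx]
    exact hcomb
  -- limits
  have hdivtop : ∀ c : ℝ, Tendsto (fun x : ℝ => c / x) atTop (𝓝 0) :=
    fun c => tendsto_const_nhds.div_atTop tendsto_id
  have hdivbot : ∀ c : ℝ, Tendsto (fun x : ℝ => c / x) atBot (𝓝 0) := by
    intro c
    have h := (tendsto_const_nhds (x := c)).div_atTop tendsto_neg_atBot_atTop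
    have h2 := h.neg
    simp only [div_neg, neg_neg, neg_zero] at h2
    exact h2
  have hsqlim : ∀ l : Filter ℝ, Tendsto (fun x : ℝ => p/x) l (𝓝 0) →
      Tendsto (fun x : ℝ => q/x) l (𝓝 0) →
      Tendsto (fun x : ℝ => Real.sqrt ((1 - p/x)^2 + (q/x)^2)) l (𝓝 1) := by
    intro l h1 h2
    have hin : Tendsto (fun x : ℝ => (1 - p/x)^2 + (q/x)^2) l (𝓝 1) := by
      have h3 := (((tendsto_const_nhds (x := (1:ℝ))).sub h1).pow 2).add (h2.pow 2)
      norm_num at h3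
      exact h3
    have h4 := (Real.continuous_sqrt.continuousAt (x := (1:ℝ))).tendsto.comp hin
    simpa [Function.comp_def] using h4
  have hfrac : ∀ x : ℝ, x ≠ 0 → ((x - p)^2 + q^2) / x^2 = (1 - p/x)^2 + (q/x)^2 := by
    intro x hx; field_simp
  have htop : Tendsto F atTop (𝓝 (-(R⁻¹) * Real.log (R - p))) := by
    have hvx : Tendsto (fun x => v x / x) atTop (𝓝 (R - p)) := by
      have hgt : Tendsto (fun x : ℝ => R * Real.sqrt ((1 - p/x)^2 + (q/x)^2) + R^2/x - p)
          atTop (𝓝 (R*1 + 0 - p)) :=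
        (((hsqlim atTop (hdivtop p) (hdivtop q)).const_mul R).add (hdivtop (R^2))).sub
          tendsto_const_nhds
      rw [show R*1+0-p = R - p by ring] at hgt
      apply hgt.congr'
      filter_upwards [eventually_gt_atTop (0:ℝ)] with x hx
      have hAx : A x = x * Real.sqrt ((1 - p/x)^2 + (q/x)^2) := by
        rw [← hfrac x hx.ne', Real.sqrt_div (by positivity), Real.sqrt_sq hx.le]
        simp only [hAdef]
        field_simp
      simp only [hvdef]
      rw [hAx]
      field_simp
    have hlog : Tendsto (fun x => Real.log (v x / x)) atTop (𝓝 (Real.log (R - p))) :=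
      (Real.continuousAt_log hRp2.ne').tendsto.comp hvx
    apply (hlog.const_mul (-(R⁻¹))).congr'
    filter_upwards [eventually_gt_atTop (0:ℝ)] with x hx
    simp only [hFdef]
    rw [Real.log_div (hv x).ne' hx.ne']
  have hbot : Tendsto F atBot (𝓝 (-(R⁻¹) * Real.log (R + p))) := by
    have hvx : Tendsto (fun x => v x / x) atBot (𝓝 (-(R + p))) := by
      have hgt : Tendsto (fun x : ℝ => -R * Real.sqrt ((1 - p/x)^2 + (q/x)^2) + R^2/x - p)
          atBot (𝓝 (-R*1 + 0 - p)) :=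
        (((hsqlim atBot (hdivbot p) (hdivbot q)).const_mul (-R)).add (hdivbot (R^2))).sub
          tendsto_const_nhds
      rw [show -R*1+0-p = -(R + p) by ring] at hgt
      apply hgt.congr'
      filter_upwards [eventually_lt_atBot (0:ℝ)] with x hx
      have hAx : A x = -x * Real.sqrt ((1 - p/x)^2 + (q/x)^2) := by
        rw [← hfrac x hx.ne, Real.sqrt_div (by positivity), Real.sqrt_sq_eq_abs,
          abs_of_neg hx]
        simp only [hAdef]
        field_simp [hx.ne]
      simp only [hvdef]
      rw [hAx]
      field_simp [hx.ne]
    have hne : -(R + p) ≠ 0 := by linarith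
    have hlog : Tendsto (fun x => Real.log (v x / x)) atBot (𝓝 (Real.log (-(R + p)))) :=
      (Real.continuousAt_log hne).tendsto.comp hvx
    rw [Real.log_neg_eq_log] at hlog
    apply (hlog.const_mul (-(R⁻¹))).congr'
    filter_upwards [eventually_lt_atBot (0:ℝ)] with x hx
    simp only [hFdef]
    rw [Real.log_div (hv x).ne' hx.ne]
  have hfun : (fun x : ℝ => 1/(x * ‖(x:ℂ) - z₀‖)) = fun x => 1/(x * A x) :=
    funext fun x => by rw [habs x]
  constructor
  · intro r hr
    have hderiv : ∀ x ∈ Set.Ici r, HasDerivAt F (1/(x * A x)) x :=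
      fun x hx => hF x (ne_of_gt (lt_of_lt_of_le hr hx))
    have hpos : ∀ x ∈ Set.Ioi r, 0 ≤ 1/(x * A x) := by
      intro x hx
      have hx0 : 0 < x := lt_trans hr hx
      exact (div_pos one_pos (mul_pos hx0 (hApos x))).le
    have hint := integrableOn_Ioi_deriv_of_nonneg'
      (g' := fun x => 1/(x * A x)) hderiv hpos htop
    have hkey := integral_Ioi_of_hasDerivAt_of_nonneg'
      (g' := fun x => 1/(x * A x)) hderiv hpos htop
    have habsr : ‖z₀ - (r:ℂ)‖ = A r := by
      rw [show z₀ - (r:ℂ) = -((r:ℂ) - z₀) by ring, norm_neg, habs r]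
    rw [habsr]
    have hA2' : (A r)^2 = (r - R)^2 + 2*r*(R - p) := by
      rw [hA2 r]; linear_combination -hR2
    have h1 : 0 < R + A r - r := by nlinarith [hApos r, mul_pos hr hRp2]
    have h2 : 0 < R + r - A r := by nlinarith [hApos r, mul_pos hr hRp2]
    refine ⟨by rw [hfun]; exact hint,
      div_pos (mul_pos h1 hRp1) (mul_pos h2 hRp2), ?_⟩
    rw [hfun, hkey]
    have hval : v r / (r * (R - p)) = ((R + A r - r) * (R + p)) / ((R + r - A r) * (R - p)) := by
      rw [div_eq_div_iff (mul_pos hr hRp2).ne' (mul_pos h2 hRp2).ne']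
      simp only [hvdef]
      linear_combination (-R*(R-p)) * hA2 r + (R*(R-p)) * hR2
    rw [← hval, Real.log_div (hv r).ne' (mul_pos hr hRp2).ne',
      Real.log_mul hr.ne' hRp2.ne']
    simp only [hFdef]
    field_simp
    ring
  · intro δ hδ
    have hδ0 : (-δ) < 0 := by linarith
    have hderiv : ∀ x ∈ Set.Iic (-δ), HasDerivAt F (1/(x * A x)) x :=
      fun x hx => hF x (ne_of_lt (lt_of_le_of_lt hx hδ0))
    have hderivneg : ∀ x ∈ Set.Ici δ, HasDerivAt (fun y => F (-y)) (-(1/((-x) * A (-x)))) x := by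
      intro x hx
      have hx0 : (0:ℝ) < x := lt_of_lt_of_le hδ hx
      have h := (hF (-x) (neg_ne_zero.mpr (ne_of_gt hx0))).comp
        x (hasDerivAt_neg x)
      simpa [Function.comp_def] using h
    have hposneg : ∀ x ∈ Set.Ioi δ, 0 ≤ -(1/((-x) * A (-x))) := by
      intro x hx
      have hx0 : (0:ℝ) < x := lt_trans hδ hx
      have hA0 := hApos (-x)
      rw [neg_nonneg]
      apply div_nonpos_of_nonneg_of_nonpos zero_le_one
      nlinarith
    have htendneg : Tendsto (fun y : ℝ => F (-y)) atTop (𝓝 (-(R⁻¹) * Real.log (R + p))) := by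
      have := hbot.comp tendsto_neg_atTop_atBot
      simpa [Function.comp_def] using this
    have hintneg := integrableOn_Ioi_deriv_of_nonneg'
      (g' := fun x => -(1/((-x) * A (-x)))) hderivneg hposneg htendneg
    have hintIio : MeasureTheory.IntegrableOn (fun x => 1/(x * A x)) (Set.Iio (-δ)) := by
      have hcomp : MeasureTheory.IntegrableOn ((fun x => 1/(x * A x)) ∘ Neg.neg)
          (Neg.neg ⁻¹' (Set.Iio (-δ))) := by
        have hpre : (Neg.neg ⁻¹' (Set.Iio (-δ)) : Set ℝ) = Set.Ioi δ := by
          ext x; simp [neg_lt_neg_iff]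
        have hfe : ((fun x => 1/(x * A x)) ∘ Neg.neg)
            = (fun x : ℝ => -(-(1/((-x) * A (-x))))) := by
          funext y
          simp only [Function.comp_def, neg_neg]
        rw [hpre, hfe]
        exact hintneg.neg
      exact (MeasurePreserving.integrableOn_comp_preimage
        (Measure.measurePreserving_neg (volume : Measure ℝ))
        (Homeomorph.neg ℝ).measurableEmbedding).1 hcomp
    have hintIic : MeasureTheory.IntegrableOn (fun x => 1/(x * A x)) (Set.Iic (-δ)) :=
      (integrableOn_Iic_iff_integrableOn_Iio (f := fun x => 1/(x * A x)) (b := -δ) enorm_ne_top).2 hintIio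
    have hkey := integral_Iic_of_hasDerivAt_of_tendsto'
      (f' := fun x => 1/(x * A x)) hderiv hintIic hbot
    rw [integral_Iic_eq_integral_Iio] at hkey
    have habsδ : ‖z₀ + (δ:ℂ)‖ = A (-δ) := by
      rw [← habs (-δ)]
      rw [show ((-δ:ℝ):ℂ) - z₀ = -(z₀ + (δ:ℝ)) by push_cast; ring, norm_neg]
    rw [habsδ]
    set B := A (-δ) with hBdef
    have hB2 : B^2 = (R - δ)^2 + 2*δ*(R + p) := by
      rw [hBdef, hA2 (-δ)]; linear_combination -hR2
    have hBpos : 0 < B := hApos (-δ)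
    have h1 : 0 < B + δ - R := by nlinarith [mul_pos hδ hRp1]
    have h2 : 0 < B + δ + R := by positivity
    refine ⟨by rw [hfun]; exact hintIic.mono_set Set.Iio_subset_Iic_self,
      div_pos h1 h2, ?_⟩
    rw [hfun, hkey]
    have hval : (δ * (R + p)) / v (-δ) = (B + δ - R) / (B + δ + R) := by
      rw [div_eq_div_iff (hv (-δ)).ne' h2.ne']
      simp only [hvdef, hBdef]
      linear_combination (-R) * hB2
    have hlogneg : Real.log (-δ) = Real.log δ := by
      rw [← Real.log_neg_eq_log, neg_neg]
    rw [← hval, Real.log_div (mul_pos hδ hRp1).ne' (hv (-δ)).ne',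
      Real.log_mul hδ.ne' hRp1.ne']
    simp only [hFdef]
    rw [hlogneg]
    field_simp
    ring
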